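/- arXiv:0705.0942 — 2 statements merged into one kernel-verified Lean document; each statement's English description precedes it below -/
import Mathlib

section
/- Let Λ be the path algebra of the cyclic quiver with p > 2 vertices, and let X be an indecomposable nilpotent Λ-module whose length l is not divisible by p. Then u_[X] lies in the Lie subalgebra of L̄₀(Λ)₁ generated by the elements u_[S] for S simple nilpotent Λ-modules. -/
/-- Bracket of basis elements of `L̄₀(Λ)₁` for the cyclic quiver with `p` vertices:
`[u_{m(i,j)}, u_{m(f,g)}] = δ_{i+j,f} u_{m(i,j+g)} − δ_{f+g,i} u_{m(f,j+g)}`. -/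
noncomputable def cyclicHallBracketBasis (p : ℕ) (x y : ZMod p × ℕ) :
    (ZMod p × ℕ) →₀ ℤ :=
  (if x.1 + (x.2 : ZMod p) = y.1 then Finsupp.single (x.1, x.2 + y.2) (1 : ℤ) else 0) -
  (if y.1 + (y.2 : ZMod p) = x.1 then Finsupp.single (y.1, x.2 + y.2) (1 : ℤ) else 0)

/-- The Lie bracket of `L̄₀(Λ)₁`, extended bilinearly from the basis. -/
noncomputable def cyclicHallBracket (p : ℕ) (u v : (ZMod p × ℕ) →₀ ℤ) :
    (ZMod p × ℕ) →₀ ℤ :=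
  u.sum fun x a => v.sum fun y c => (a * c) • cyclicHallBracketBasis p x y

/-- Membership in the Lie subalgebra (over `ℤ`) of `L̄₀(Λ)₁` generated by a set `S`. -/
inductive InLieSpan (p : ℕ) (S : Set ((ZMod p × ℕ) →₀ ℤ)) : ((ZMod p × ℕ) →₀ ℤ) → Prop
  | of {x} : x ∈ S → InLieSpan p S x
  | zero : InLieSpan p S 0
  | add {x y} : InLieSpan p S x → InLieSpan p S y → InLieSpan p S (x + y)
  | smul (c : ℤ) {x} : InLieSpan p S x → InLieSpan p S (c • x)
  | bracket {x y} : InLieSpan p S x → InLieSpan p S y →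
      InLieSpan p S (cyclicHallBracket p x y)

lemma brk_single (p : ℕ) (x y : ZMod p × ℕ) (a c : ℤ) :
    cyclicHallBracket p (Finsupp.single x a) (Finsupp.single y c)
      = (a * c) • cyclicHallBracketBasis p x y := by
  unfold cyclicHallBracket
  rw [Finsupp.sum_single_index, Finsupp.sum_single_index]
  · simp
  · simp [Finsupp.sum]

lemma brk_sub_single (p : ℕ) (x x' y : ZMod p × ℕ) (a a' c : ℤ) :
    cyclicHallBracket p (Finsupp.single x a - Finsupp.single x' a') (Finsupp.single y c)
      = (a * c) • cyclicHallBracketBasis p x y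
        - (a' * c) • cyclicHallBracketBasis p x' y := by
  unfold cyclicHallBracket
  rw [Finsupp.sum_sub_index]
  · rw [Finsupp.sum_single_index, Finsupp.sum_single_index, Finsupp.sum_single_index,
      Finsupp.sum_single_index] <;> simp
  · intro z b1 b2
    rw [← Finsupp.sum_sub]
    congr 1; ext w d
    rw [sub_mul, sub_smul]

lemma main_aux (p : ℕ) (hp : 2 < p) : ∀ l : ℕ, 0 < l → ∀ i : ZMod p,
    (¬ p ∣ l → InLieSpan p {u | ∃ a : ZMod p, u = Finsupp.single (a, 1) (1 : ℤ)}
        (Finsupp.single (i, l) (1 : ℤ))) ∧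
    (p ∣ l → InLieSpan p {u | ∃ a : ZMod p, u = Finsupp.single (a, 1) (1 : ℤ)}
      (Finsupp.single (i, l) (1 : ℤ) - Finsupp.single (i - 1, l) (1 : ℤ))) := by
  haveI : NeZero p := ⟨by omega⟩
  have h1ne : (1 : ZMod p) ≠ 0 := by
    simpa using (ZMod.natCast_eq_zero_iff 1 p).not.mpr
      (fun h => absurd (Nat.le_of_dvd one_pos h) (by omega))
  have h2ne : (2 : ZMod p) ≠ 0 := by
    simpa using (ZMod.natCast_eq_zero_iff 2 p).not.mpr
      (fun h => absurd (Nat.le_of_dvd two_pos h) (by omega))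
  intro l
  induction l with
  | zero => intro h; omega
  | succ l IH =>
    intro _ i
    rcases Nat.eq_zero_or_pos l with rfl | hl
    · refine ⟨fun _ => InLieSpan.of ⟨i, rfl⟩, fun hd => ?_⟩
      exact absurd (Nat.le_of_dvd one_pos hd) (by omega)
    constructor
    · intro hnd
      by_cases hdl : p ∣ l
      · -- use the difference at length `l`, bracket with `u_{m(i,1)}`
        have hd := (IH hl i).2 hdl
        have hcast : (l : ZMod p) = 0 := (ZMod.natCast_eq_zero_iff l p).mpr hdl
        have cA2 : ¬ (i + 1 = i) := fun h => h1ne (by linear_combination h)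
        have cB1 : i - 1 ≠ i := fun h => h1ne (by linear_combination -h)
        have cB2 : ¬ (i + 1 = i - 1) := fun h => h2ne (by linear_combination h)
        have key : cyclicHallBracket p
            (Finsupp.single (i, l) (1:ℤ) - Finsupp.single (i - 1, l) (1:ℤ))
            (Finsupp.single (i, 1) (1:ℤ)) = Finsupp.single (i, l + 1) (1:ℤ) := by
          rw [brk_sub_single]
          simp [cyclicHallBracketBasis, hcast, cA2, cB1, cB2]
        rw [← key]
        exact InLieSpan.bracket hd (InLieSpan.of ⟨i, rfl⟩)
      · have h1 := (IH hl i).1 hdl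
        have hcast : ((l : ZMod p) + 1) ≠ 0 := by
          intro h
          have : ((l + 1 : ℕ) : ZMod p) = 0 := by push_cast; linear_combination h
          rw [ZMod.natCast_eq_zero_iff] at this
          exact hnd this
        have c2 : ¬ (i + (l : ZMod p) + 1 = i) := fun h => hcast (by linear_combination h)
        have key : cyclicHallBracket p (Finsupp.single (i, l) (1:ℤ))
            (Finsupp.single (i + l, 1) (1:ℤ)) = Finsupp.single (i, l + 1) (1:ℤ) := by
          rw [brk_single]
          simp [cyclicHallBracketBasis, c2]
        rw [← key]
        exact InLieSpan.bracket h1 (InLieSpan.of ⟨i + l, rfl⟩)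
    · intro hd
      have hndl : ¬ p ∣ l := by
        intro h
        have h1 := Nat.dvd_sub hd h
        rw [Nat.add_sub_cancel_left] at h1
        exact absurd (Nat.le_of_dvd one_pos h1) (by omega)
      have h1 := (IH hl i).1 hndl
      have hcast : (l : ZMod p) = -1 := by
        have : ((l + 1 : ℕ) : ZMod p) = 0 := (ZMod.natCast_eq_zero_iff _ p).mpr hd
        push_cast at this; linear_combination this
      have c2 : i + (l : ZMod p) + 1 = i := by rw [hcast]; ring
      have hrw : i + (l : ZMod p) = i - 1 := by rw [hcast]; ring
      have key : cyclicHallBracket p (Finsupp.single (i, l) (1:ℤ))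
          (Finsupp.single (i + l, 1) (1:ℤ))
          = Finsupp.single (i, l + 1) (1:ℤ) - Finsupp.single (i - 1, l + 1) (1:ℤ) := by
        rw [brk_single]
        simp [cyclicHallBracketBasis, c2, hrw, smul_sub]
      rw [← key]
      exact InLieSpan.bracket h1 (InLieSpan.of ⟨i + l, rfl⟩)

/-- For the cyclic quiver with `p > 2` vertices and an indecomposable
nilpotent module `X = m(i, l)` with length `l` not divisible by `p`, the basis element
`u_[X]` lies in the Lie subalgebra of `L̄₀(Λ)₁` generated by the `u_[S]` for `S` simple
(the simples being the modules `m(a, 1)`). -/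
theorem cyclic_basis_in_span_of_simples (p : ℕ) (hp : 2 < p) (i : ZMod p) (l : ℕ)
    (hl0 : 0 < l) (hl : ¬ p ∣ l) :
    InLieSpan p {u | ∃ a : ZMod p, u = Finsupp.single (a, 1) (1 : ℤ)}
      (Finsupp.single (i, l) (1 : ℤ)) := by
  exact (main_aux p hp l hl0 i).1 hl
end

section
/- Let A be a domestic canonical algebra and v a positive root of χ_A. Define deg v := v − v_∞ δ. Then deg v is a root of the restricted quadratic form χ_{kQˡ} on ℤ^{Δ₀}, where Qˡ is the quiver obtained from Q by deleting the vertex ∞. Moreover the map deg from positive roots of χ_A to roots of χ_{kQˡ} is surjective. -/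
/-- Vertices of the quiver `Q` of a canonical algebra with `r` arms, where arm `i`
has `p i` arrows (so `p i - 1` intermediate vertices): `Sum.inl ()` is the vertex `1`,
`Sum.inr (Sum.inl ⟨i, j⟩)` is the `j`-th intermediate vertex `x_{i,j+2}` of arm `i`,
and `Sum.inr (Sum.inr ())` is the vertex `∞`. -/
abbrev StarVert (r : ℕ) (p : Fin r → ℕ) : Type :=
  Unit ⊕ ((Σ i : Fin r, Fin (p i - 1)) ⊕ Unit)

/-- The vertex `1` (the sink of the quiver). -/
def StarVert.one (r : ℕ) (p : Fin r → ℕ) : StarVert r p := Sum.inl ()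

/-- The vertex `∞` (the source of the quiver). -/
def StarVert.inf (r : ℕ) (p : Fin r → ℕ) : StarVert r p := Sum.inr (Sum.inr ())

/-- The `t`-th vertex along arm `i`, walking from `∞` (at `t = 0`) to `1` (at `t = p i`). -/
def StarVert.node (r : ℕ) (p : Fin r → ℕ) (i : Fin r) (t : ℕ) : StarVert r p :=
  if t = 0 then StarVert.inf r p
  else if h : 1 ≤ t ∧ t ≤ p i - 1 then Sum.inr (Sum.inl ⟨i, ⟨t - 1, by omega⟩⟩)
  else StarVert.one r p

/-- The (non-symmetric) bilinear form `B_A` of the canonical algebra on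
`K₀(A) ≅ ℤ^{Q₀}`:
`B(v,w) = Σ_x v_x w_x − Σ_{x→y} v_x w_y` in type `A_n` (i.e. `r = 2`), with the extra
term `+ v_∞ w_1` otherwise (`r = 3`).  The arrows are the arm arrows
`node i t → node i (t+1)` for `t = 0, …, p i − 1`. -/
def starB (r : ℕ) (p : Fin r → ℕ) (v w : StarVert r p → ℤ) : ℤ :=
  (∑ x : StarVert r p, v x * w x) -
    (∑ i : Fin r, ∑ t : Fin (p i),
      v (StarVert.node r p i (t : ℕ)) * w (StarVert.node r p i ((t : ℕ) + 1))) +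
  (if r = 2 then 0 else v (StarVert.inf r p) * w (StarVert.one r p))

lemma mid_sum (r : ℕ) (p : Fin r → ℕ) (w : StarVert r p → ℤ) (i : Fin r) :
    ∑ t ∈ Finset.range (p i - 1), w (StarVert.node r p i (t + 1)) =
      ∑ j : Fin (p i - 1), w (Sum.inr (Sum.inl ⟨i, j⟩)) := by
  set g : ℕ → ℤ := fun t => if h : t < p i - 1 then w (Sum.inr (Sum.inl ⟨i, ⟨t, h⟩⟩)) else 0 with hg
  have s1 : ∑ t ∈ Finset.range (p i - 1), w (StarVert.node r p i (t + 1)) =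
      ∑ t ∈ Finset.range (p i - 1), g t := by
    refine Finset.sum_congr rfl fun t ht => ?_
    rw [Finset.mem_range] at ht
    simp only [StarVert.node, hg]
    rw [if_neg (by omega), dif_pos (by omega : 1 ≤ t + 1 ∧ t + 1 ≤ p i - 1), dif_pos ht]
    congr 2
  rw [s1, ← Fin.sum_univ_eq_sum_range g (p i - 1)]
  exact Finset.sum_congr rfl fun j _ => by simp [hg, j.isLt]

lemma sum_node (r : ℕ) (p : Fin r → ℕ) (hp : ∀ i, 1 ≤ p i) (w : StarVert r p → ℤ) (i : Fin r) :
    ∑ t : Fin (p i), w (StarVert.node r p i (t : ℕ)) =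
      w (StarVert.inf r p) + ∑ j : Fin (p i - 1), w (Sum.inr (Sum.inl ⟨i, j⟩)) := by
  rw [Fin.sum_univ_eq_sum_range (fun t => w (StarVert.node r p i t)) (p i)]
  have h1 : p i = (p i - 1) + 1 := by have := hp i; omega
  rw [show Finset.range (p i) = Finset.range ((p i - 1) + 1) from by rw [← h1],
    Finset.sum_range_succ']
  rw [mid_sum]
  simp [StarVert.node, add_comm]

lemma sum_node' (r : ℕ) (p : Fin r → ℕ) (hp : ∀ i, 1 ≤ p i) (w : StarVert r p → ℤ) (i : Fin r) :
    ∑ t : Fin (p i), w (StarVert.node r p i ((t : ℕ) + 1)) =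
      (∑ j : Fin (p i - 1), w (Sum.inr (Sum.inl ⟨i, j⟩))) + w (StarVert.one r p) := by
  rw [Fin.sum_univ_eq_sum_range (fun t => w (StarVert.node r p i (t + 1))) (p i)]
  have h1 : p i = (p i - 1) + 1 := by have := hp i; omega
  rw [show Finset.range (p i) = Finset.range ((p i - 1) + 1) from by rw [← h1],
    Finset.sum_range_succ]
  rw [mid_sum]
  congr 1
  have : StarVert.node r p i (p i - 1 + 1) = StarVert.one r p := by
    simp only [StarVert.node]
    rw [if_neg (by omega), dif_neg (by omega)]
  rw [this]

lemma sum_all (r : ℕ) (p : Fin r → ℕ) (f : StarVert r p → ℤ) :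
    ∑ x : StarVert r p, f x =
      f (StarVert.one r p) + (∑ i : Fin r, ∑ j : Fin (p i - 1), f (Sum.inr (Sum.inl ⟨i, j⟩)))
        + f (StarVert.inf r p) := by
  rw [Fintype.sum_sum_type, Fintype.sum_sum_type, Finset.sum_sigma']
  simp [StarVert.one, StarVert.inf, add_assoc]

/-- The radical of the quadratic form contains `δ = (1,…,1)`:  shifting a vector by a
constant does not change the value of the form. -/
lemma starB_shift (r : ℕ) (p : Fin r → ℕ) (hr : r = 2 ∨ r = 3) (hp : ∀ i, 1 ≤ p i)
    (w : StarVert r p → ℤ) (c : ℤ) :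
    starB r p (fun x => w x + c) (fun x => w x + c) = starB r p w w := by
  unfold starB
  set M : Fin r → ℤ := fun i => ∑ j : Fin (p i - 1), w (Sum.inr (Sum.inl ⟨i, j⟩)) with hM
  set T : ℤ := ∑ i : Fin r, M i with hT
  have h1 : ∑ x : StarVert r p, (w x + c) * (w x + c) =
      (∑ x : StarVert r p, w x * w x) +
        (2 * c * (w (StarVert.one r p) + T + w (StarVert.inf r p)) +
          c * c * (2 + ∑ i : Fin r, ((p i : ℤ) - 1))) := by
    have e : ∀ x, (w x + c) * (w x + c) = w x * w x + (2 * c * w x + c * c) := by intro x; ring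
    rw [Finset.sum_congr rfl fun x _ => e x, Finset.sum_add_distrib, Finset.sum_add_distrib,
      Finset.sum_const, ← Finset.mul_sum, sum_all r p w]
    have hcard : ((Finset.univ : Finset (StarVert r p)).card) • (c * c) =
        (2 + ∑ i : Fin r, ((p i : ℤ) - 1)) * (c * c) := by
      rw [Finset.card_univ, nsmul_eq_mul]
      congr 1
      simp only [Fintype.card_sum, Fintype.card_unit, Fintype.card_sigma, Fintype.card_fin]
      push_cast
      rw [Finset.sum_congr rfl fun i _ => (Nat.cast_sub (hp i) : ((p i - 1 : ℕ) : ℤ) = (p i : ℤ) - 1)]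
      push_cast
      ring
    rw [hcard]; ring
  have h2 : ∀ i : Fin r, ∑ t : Fin (p i),
      (w (StarVert.node r p i (t : ℕ)) + c) * (w (StarVert.node r p i ((t : ℕ) + 1)) + c) =
      (∑ t : Fin (p i), w (StarVert.node r p i (t : ℕ)) * w (StarVert.node r p i ((t : ℕ) + 1)))
        + (c * (w (StarVert.inf r p) + M i) + c * (M i + w (StarVert.one r p))
            + c * c * (p i : ℤ)) := by
    intro i
    have e : ∀ t : Fin (p i),
        (w (StarVert.node r p i (t : ℕ)) + c) * (w (StarVert.node r p i ((t : ℕ) + 1)) + c) =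
        w (StarVert.node r p i (t : ℕ)) * w (StarVert.node r p i ((t : ℕ) + 1)) +
          (c * w (StarVert.node r p i (t : ℕ)) + (c * w (StarVert.node r p i ((t : ℕ) + 1)) + c * c)) := by
      intro t; ring
    rw [Finset.sum_congr rfl fun t _ => e t, Finset.sum_add_distrib, Finset.sum_add_distrib,
      Finset.sum_add_distrib, Finset.sum_const, ← Finset.mul_sum, ← Finset.mul_sum,
      sum_node r p hp w i, sum_node' r p hp w i, Finset.card_univ, Fintype.card_fin,
      nsmul_eq_mul]
    ring
  rw [h1, Finset.sum_congr rfl fun i _ => h2 i, Finset.sum_add_distrib, Finset.sum_add_distrib,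
    Finset.sum_add_distrib, ← Finset.mul_sum, ← Finset.mul_sum, ← Finset.mul_sum,
    Finset.sum_add_distrib, Finset.sum_add_distrib, Finset.sum_const, Finset.sum_const,
    Finset.card_univ, Fintype.card_fin, nsmul_eq_mul, nsmul_eq_mul, ← hT]
  have hsub : ∑ i : Fin r, ((p i : ℤ) - 1) = (∑ i : Fin r, (p i : ℤ)) - r := by
    rw [Finset.sum_sub_distrib, Finset.sum_const, Finset.card_univ, Fintype.card_fin,
      nsmul_eq_mul, mul_one]
  rw [hsub]
  rcases hr with h | h <;> subst h <;> simp <;> ring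

/-- Let `A` be a domestic canonical algebra and `v` a positive root of
`χ_A`.  Then `deg v := v − v_∞ δ` is a root of the Tits form `χ_{kQˡ}` of the Dynkin
quiver `Qˡ` obtained by deleting the vertex `∞` (a vector supported away from `∞`, on
which `χ_{kQˡ}` agrees with `χ_A`).  Moreover `deg` maps the positive roots of `χ_A`
surjectively onto the roots of `χ_{kQˡ}`. -/
theorem deg_root_and_surjective (r : ℕ) (p : Fin r → ℕ) (hr : r = 2 ∨ r = 3)
    (hp : ∀ i, 1 ≤ p i) :
    (∀ v : StarVert r p → ℤ, (∀ x, 0 ≤ v x) → v ≠ 0 → starB r p v v = 1 →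
      (fun x => v x - v (StarVert.inf r p)) (StarVert.inf r p) = 0 ∧
      starB r p (fun x => v x - v (StarVert.inf r p))
        (fun x => v x - v (StarVert.inf r p)) = 1) ∧
    (∀ w : StarVert r p → ℤ, w (StarVert.inf r p) = 0 → starB r p w w = 1 →
      ∃ v : StarVert r p → ℤ, (∀ x, 0 ≤ v x) ∧ v ≠ 0 ∧ starB r p v v = 1 ∧
        (fun x => v x - v (StarVert.inf r p)) = w) := by
  constructor
  · intro v hv hv0 hq
    refine ⟨sub_self _, ?_⟩
    have h := starB_shift r p hr hp v (-(v (StarVert.inf r p)))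
    simp only [sub_eq_add_neg]
    exact h.trans hq
  · intro w hw hq
    set c : ℤ := 1 + ∑ x : StarVert r p, |w x| with hc
    have hsum : 0 ≤ ∑ x : StarVert r p, |w x| :=
      Finset.sum_nonneg fun x _ => abs_nonneg _
    have habs : ∀ x, |w x| ≤ ∑ y : StarVert r p, |w y| := fun x =>
      Finset.single_le_sum (fun y _ => abs_nonneg (w y)) (Finset.mem_univ x)
    refine ⟨fun x => w x + c, ?_, ?_, ?_, ?_⟩
    · intro x
      have h1 := habs x
      have h2 := neg_abs_le (w x)
      simp only [hc]
      linarith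
    · intro h0
      have h1 : w (StarVert.inf r p) + c = 0 := congrFun h0 (StarVert.inf r p)
      rw [hw] at h1
      simp only [hc] at h1
      linarith
    · exact (starB_shift r p hr hp w c).trans hq
    · funext x
      simp [hw]
end
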